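/- Let X be a finite set with |X| ≥ 5 and let 𝓕 be a symmetric conservative clone on X some binary member of which is not a projection. Then for every injective tuple ā = (a₁, a₂, a₃, a₄) ∈ X⁴ there exists a 4-ary g ∈ 𝓕 such that g(b̄) = b₁ for every b̄ ∈ X⁴ with a repeated entry, and g(ā) = a₂. -/
import Mathlib


/-- `F` is a clone on `X`. -/
def IsClone {X : Type*} (F : ∀ n : ℕ, Set ((Fin n → X) → X)) : Prop :=
  (∀ n : ℕ, ∀ i : Fin n, (fun x : Fin n → X => x i) ∈ F n) ∧
  (∀ n m : ℕ, 0 < n → 0 < m → ∀ f ∈ F n, ∀ g : Fin n → (Fin m → X) → X,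
    (∀ i, g i ∈ F m) → (fun x : Fin m → X => f fun i => g i x) ∈ F m)

/-- `f` is a projection (monarchy). -/
def IsProj {X : Type*} (n : ℕ) (f : (Fin n → X) → X) : Prop :=
  ∃ t : Fin n, ∀ x : Fin n → X, f x = x t

/-- The clone `F` is symmetric. -/
def SymClone {X : Type*} (F : ∀ n : ℕ, Set ((Fin n → X) → X)) : Prop :=
  ∀ π : Equiv.Perm X, ∀ n : ℕ, ∀ f ∈ F n,
    (fun x : Fin n → X => π.symm (f fun i => π (x i))) ∈ F n

/-- The clone `F` is conservative: every member always returns one of its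
arguments. -/
def Conservative {X : Type*} (F : ∀ n : ℕ, Set ((Fin n → X) → X)) : Prop :=
  ∀ n : ℕ, ∀ f ∈ F n, ∀ x : Fin n → X, ∃ i : Fin n, f x = x i

/-- deviation set of a binary operation -/
def S2 {X : Type*} (h : (Fin 2 → X) → X) : Set (X × X) :=
  {p | p.1 ≠ p.2 ∧ h ![p.1, p.2] = p.2}

/-- representable deviation sets -/
def GoodS {X : Type*} (F : ∀ n : ℕ, Set ((Fin n → X) → X)) (S : Set (X × X)) : Prop :=
  ∃ h ∈ F 2, S = S2 h

section lems
variable {X : Type*} {F : ∀ n : ℕ, Set ((Fin n → X) → X)}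

lemma cons2 (hcons : Conservative F) {h : (Fin 2 → X) → X} (hh : h ∈ F 2) :
    ∀ x y : X, h ![x, y] = x ∨ h ![x, y] = y := by
  intro x y
  obtain ⟨i, hi⟩ := hcons 2 h hh ![x, y]
  fin_cases i
  · left; simpa using hi
  · right; simpa using hi

lemma S2_eq_y {h : (Fin 2 → X) → X} {x y : X} (hxy : (x, y) ∈ S2 h) : h ![x, y] = y := hxy.2

lemma S2_eq_x (hcons : Conservative F) {h : (Fin 2 → X) → X} (hh : h ∈ F 2)
    {x y : X} (hxy : (x, y) ∉ S2 h) : h ![x, y] = x := by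
  rcases cons2 hcons hh x y with h1 | h1
  · exact h1
  · rcases eq_or_ne x y with rfl | hne
    · exact h1
    · exact absurd ⟨hne, h1⟩ hxy

/-- binary composition helper -/
lemma comp2 (hF : IsClone F) {h : (Fin 2 → X) → X} (hh : h ∈ F 2) {m : ℕ} (hm : 0 < m)
    {A B : (Fin m → X) → X} (hA : A ∈ F m) (hB : B ∈ F m) :
    (fun x : Fin m → X => h ![A x, B x]) ∈ F m := by
  have hmem : ∀ i : Fin 2, (![A, B] : Fin 2 → (Fin m → X) → X) i ∈ F m := by
    intro i; fin_cases i
    · simpa using hA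
    · simpa using hB
  have := hF.2 2 m (by norm_num) hm h hh ![A, B] hmem
  have e : (fun x : Fin m → X => h ![A x, B x])
      = (fun x => h fun i => (![A, B] : Fin 2 → (Fin m → X) → X) i x) := by
    funext x; congr 1; funext i; fin_cases i <;> simp
  rw [e]; exact this

lemma good_inter (hF : IsClone F) (hcons : Conservative F) {S T : Set (X × X)}
    (hS : GoodS F S) (hT : GoodS F T) : GoodS F (S ∩ T) := by
  obtain ⟨h, hh, rfl⟩ := hS
  obtain ⟨k, hk, rfl⟩ := hT
  refine ⟨fun x => h ![x 0, k x], comp2 hF hh (by norm_num) (hF.1 2 0) hk, ?_⟩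
  ext ⟨x, y⟩
  simp only [S2, Set.mem_inter_iff, Set.mem_setOf_eq, Matrix.cons_val_zero]
  constructor
  · rintro ⟨⟨hne, hhy⟩, -, hky⟩
    exact ⟨hne, by rw [hky]; exact hhy⟩
  · rintro ⟨hne, hv⟩
    rcases cons2 hcons hk x y with hk1 | hk1
    · rw [hk1] at hv
      rcases cons2 hcons hh x x with h2 | h2 <;> rw [h2] at hv <;> exact absurd hv hne
    · rw [hk1] at hv
      exact ⟨⟨hne, hv⟩, hne, hk1⟩

lemma good_perm (hsym : SymClone F) {S : Set (X × X)} (hS : GoodS F S) (π : Equiv.Perm X) :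
    GoodS F {p : X × X | (π p.1, π p.2) ∈ S} := by
  obtain ⟨h, hh, rfl⟩ := hS
  refine ⟨fun x => π.symm (h fun i => π (x i)), hsym π 2 h hh, ?_⟩
  ext ⟨x, y⟩
  have e : (fun i => π ((![x, y] : Fin 2 → X) i)) = ![π x, π y] := by
    funext i; fin_cases i <;> simp
  simp only [S2, Set.mem_setOf_eq, e]
  constructor
  · rintro ⟨hne, hv⟩
    refine ⟨fun hxy => hne (congrArg π hxy), ?_⟩
    rw [hv]; exact π.symm_apply_apply y
  · rintro ⟨hne, hv⟩
    have hv2 : h ![π x, π y] = π y := by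
      have := congrArg π hv
      simpa using this
    exact ⟨fun hxy => hne (π.injective hxy), hv2⟩

lemma good_rho (hF : IsClone F) (hcons : Conservative F) {S : Set (X × X)} (hS : GoodS F S) :
    GoodS F {p : X × X | p.1 ≠ p.2 ∧ (p.2, p.1) ∉ S} := by
  obtain ⟨h, hh, rfl⟩ := hS
  refine ⟨fun x => h ![x 1, x 0], comp2 hF hh (by norm_num) (hF.1 2 1) (hF.1 2 0), ?_⟩
  ext ⟨x, y⟩
  simp only [S2, Set.mem_setOf_eq, Matrix.cons_val_zero, Matrix.cons_val_one, Matrix.head_cons]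
  constructor
  · rintro ⟨hne, hv⟩
    refine ⟨hne, ?_⟩
    rcases cons2 hcons hh y x with h1 | h1
    · exact h1
    · exact absurd ⟨hne.symm, h1⟩ hv
  · rintro ⟨hne, hv⟩
    exact ⟨hne, fun hc => hne (hc.2.symm.trans hv)⟩

lemma good_ne {S : Set (X × X)} (hS : GoodS F S) {x y : X} (hxy : (x, y) ∈ S) : x ≠ y := by
  obtain ⟨h, -, rfl⟩ := hS
  exact hxy.1

end lems

section mid
variable {X : Type*} {F : ∀ n : ℕ, Set ((Fin n → X) → X)}

/-- minimal nonempty representable set -/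
def MinS (F : ∀ n : ℕ, Set ((Fin n → X) → X)) (S : Set (X × X)) : Prop :=
  GoodS F S ∧ S.Nonempty ∧ ∀ U, GoodS F U → U ⊆ S → U.Nonempty → U = S

def ProperS (S : Set (X × X)) : Prop := ∃ m n : X, m ≠ n ∧ (m, n) ∉ S

lemma step (hF : IsClone F) (hsym : SymClone F) (hcons : Conservative F)
    {S : Set (X × X)} (hmin : MinS F S) (π : Equiv.Perm X)
    {s t : X} (hst : (s, t) ∈ S) (hst' : (π s, π t) ∈ S) :
    ∀ p ∈ S, (π p.1, π p.2) ∈ S := by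
  intro p hp
  have hgood : GoodS F (S ∩ {p : X × X | (π p.1, π p.2) ∈ S}) :=
    good_inter hF hcons hmin.1 (good_perm hsym hmin.1 π)
  have hU : S ∩ {p : X × X | (π p.1, π p.2) ∈ S} = S :=
    hmin.2.2 _ hgood Set.inter_subset_left ⟨(s, t), hst, hst'⟩
  have := hU ▸ hp
  exact this.2

lemma rowfill (hF : IsClone F) (hsym : SymClone F) (hcons : Conservative F)
    {S : Set (X × X)} (hmin : MinS F S) {x y1 y2 : X}
    (h1 : (x, y1) ∈ S) (h2 : (x, y2) ∈ S) (h12 : y1 ≠ y2) :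
    ∀ z, z ≠ x → (x, z) ∈ S := by
  classical
  intro z hz
  have hy1 : x ≠ y1 := good_ne hmin.1 h1
  have hy2 : x ≠ y2 := good_ne hmin.1 h2
  rcases eq_or_ne z y1 with rfl | hz1
  · exact h1
  rcases eq_or_ne z y2 with rfl | hz2
  · exact h2
  set σ : Equiv.Perm X := (Equiv.swap y1 y2).trans (Equiv.swap y1 z) with hσ
  have hσx : σ x = x := by
    simp only [hσ, Equiv.trans_apply]
    rw [Equiv.swap_apply_of_ne_of_ne hy1.symm.symm hy2.symm.symm,
      Equiv.swap_apply_of_ne_of_ne hy1.symm.symm (Ne.symm hz)]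
  have hσy1 : σ y1 = y2 := by
    simp only [hσ, Equiv.trans_apply]
    rw [Equiv.swap_apply_left, Equiv.swap_apply_of_ne_of_ne h12.symm hz2.symm]
  have hσy2 : σ y2 = z := by
    simp only [hσ, Equiv.trans_apply]
    rw [Equiv.swap_apply_right, Equiv.swap_apply_left]
  have := step hF hsym hcons hmin σ h1 (by rw [hσx, hσy1]; exact h2) (x, y2) h2
  rwa [hσx, hσy2] at this

lemma colfill (hF : IsClone F) (hsym : SymClone F) (hcons : Conservative F)
    {S : Set (X × X)} (hmin : MinS F S) {x1 x2 y : X}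
    (h1 : (x1, y) ∈ S) (h2 : (x2, y) ∈ S) (h12 : x1 ≠ x2) :
    ∀ z, z ≠ y → (z, y) ∈ S := by
  classical
  intro z hz
  have hy1 : x1 ≠ y := good_ne hmin.1 h1
  have hy2 : x2 ≠ y := good_ne hmin.1 h2
  rcases eq_or_ne z x1 with rfl | hz1
  · exact h1
  rcases eq_or_ne z x2 with rfl | hz2
  · exact h2
  set σ : Equiv.Perm X := (Equiv.swap x1 x2).trans (Equiv.swap x1 z) with hσ
  have hσy : σ y = y := by
    simp only [hσ, Equiv.trans_apply]
    rw [Equiv.swap_apply_of_ne_of_ne hy1.symm hy2.symm,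
      Equiv.swap_apply_of_ne_of_ne hy1.symm (Ne.symm hz)]
  have hσ1 : σ x1 = x2 := by
    simp only [hσ, Equiv.trans_apply]
    rw [Equiv.swap_apply_left, Equiv.swap_apply_of_ne_of_ne h12.symm hz2.symm]
  have hσ2 : σ x2 = z := by
    simp only [hσ, Equiv.trans_apply]
    rw [Equiv.swap_apply_right, Equiv.swap_apply_left]
  have := step hF hsym hcons hmin σ h1 (by rw [hσy, hσ1]; exact h2) (x2, y) h2
  rwa [hσy, hσ2] at this

lemma exists_notin4 [Fintype X] (hX : 5 ≤ Fintype.card X) (a b c d : X) :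
    ∃ e : X, e ≠ a ∧ e ≠ b ∧ e ≠ c ∧ e ≠ d := by
  classical
  by_contra hcon
  push_neg at hcon
  have hsub : (Finset.univ : Finset X) ⊆ {a, b, c, d} := by
    intro e _
    simp only [Finset.mem_insert, Finset.mem_singleton]
    by_cases h1 : e = a; · exact Or.inl h1
    by_cases h2 : e = b; · exact Or.inr (Or.inl h2)
    by_cases h3 : e = c; · exact Or.inr (Or.inr (Or.inl h3))
    exact Or.inr (Or.inr (Or.inr (hcon e h1 h2 h3)))
  have h4 : ({a, b, c, d} : Finset X).card ≤ 4 := by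
    apply le_trans (Finset.card_insert_le _ _)
    have : ({b, c, d} : Finset X).card ≤ 3 := by
      apply le_trans (Finset.card_insert_le _ _)
      have : ({c, d} : Finset X).card ≤ 2 := by
        apply le_trans (Finset.card_insert_le _ _)
        simp
      omega
    omega
  have := Finset.card_le_card hsub
  rw [Finset.card_univ] at this
  omega

lemma symall (hF : IsClone F) (hsym : SymClone F) (hcons : Conservative F)
    {S : Set (X × X)} (hmin : MinS F S) (hprop : ProperS S) {x : X}
    (hrow : ∀ z, z ≠ x → (x, z) ∈ S)
    (hsymm : ∀ p ∈ S, (p.2, p.1) ∈ S) : False := by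
  classical
  obtain ⟨m, n, hmn, hns⟩ := hprop
  apply hns
  rcases eq_or_ne m x with rfl | hmx
  · exact hrow n hmn.symm
  · have w1 : (x, m) ∈ S := hrow m hmx
    have w2 : ((Equiv.swap x m) x, (Equiv.swap x m) m) ∈ S := by
      rw [Equiv.swap_apply_left, Equiv.swap_apply_right]
      exact hsymm (x, m) w1
    have hstep := step hF hsym hcons hmin (Equiv.swap x m) w1 w2
    rcases eq_or_ne n x with rfl | hnx
    · exact hsymm _ w1
    · have hxn : (x, n) ∈ S := hrow n hnx
      have := hstep (x, n) hxn
      simp only at this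
      rwa [Equiv.swap_apply_left, Equiv.swap_apply_of_ne_of_ne hnx hmn.symm] at this

lemma tworow [Fintype X] (hX : 5 ≤ Fintype.card X)
    (hF : IsClone F) (hsym : SymClone F) (hcons : Conservative F)
    {S : Set (X × X)} (hmin : MinS F S) (hprop : ProperS S) {x y1 y2 : X}
    (h1 : (x, y1) ∈ S) (h2 : (x, y2) ∈ S) (h12 : y1 ≠ y2) : False := by
  classical
  have row : ∀ z, z ≠ x → (x, z) ∈ S := rowfill hF hsym hcons hmin h1 h2 h12
  set R : Set (X × X) := {p : X × X | p.1 ≠ p.2 ∧ (p.2, p.1) ∉ S} with hR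
  have hRgood : GoodS F R := good_rho hF hcons hmin.1
  by_cases hT : (S ∩ R).Nonempty
  · -- antisymmetric case
    have hTS : S ∩ R = S := hmin.2.2 _ (good_inter hF hcons hmin.1 hRgood)
      Set.inter_subset_left hT
    have antisym : ∀ p ∈ S, (p.2, p.1) ∉ S := by
      intro p hp
      have : p ∈ S ∩ R := by rw [hTS]; exact hp
      exact this.2.2
    have C : ∀ w, w ≠ x → ∀ t, t ≠ x → t ≠ w → (t, w) ∈ S := by
      intro w hw t htx htw
      set π := Equiv.swap x w with hπ
      set U : Set (X × X) := S ∩ {p : X × X | (π p.1, π p.2) ∈ R} with hU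
      have hUgood : GoodS F U :=
        good_inter hF hcons hmin.1 (good_perm hsym hRgood π)
      have hxwS : (x, w) ∈ S := row w hw
      have hnotU : ¬ U.Nonempty := by
        intro hne
        have hUS : U = S := hmin.2.2 _ hUgood Set.inter_subset_left hne
        have : (x, w) ∈ U := hUS ▸ hxwS
        have h2 := this.2
        simp only [Set.mem_setOf_eq] at h2
        rw [hπ] at h2
        rw [Equiv.swap_apply_left, Equiv.swap_apply_right] at h2
        exact h2.2 hxwS
      have hxtS : (x, t) ∈ S := row t htx
      by_contra htwS
      apply hnotU
      refine ⟨(x, t), hxtS, ?_⟩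
      simp only [Set.mem_setOf_eq]
      rw [hπ, Equiv.swap_apply_left, Equiv.swap_apply_of_ne_of_ne htx htw]
      exact ⟨htw.symm, htwS⟩
    obtain ⟨z, hzx, -, -, -⟩ := exists_notin4 hX x x x x
    obtain ⟨z', hz'x, hz'z, -, -⟩ := exists_notin4 hX x z z z
    have e1 : (z, z') ∈ S := C z' hz'x z hzx hz'z.symm
    have e2 : (z', z) ∈ S := C z hzx z' hz'x hz'z
    exact antisym (z, z') e1 e2
  · -- symmetric case
    have hsymm : ∀ p ∈ S, (p.2, p.1) ∈ S := by
      intro p hp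
      by_contra hns
      exact hT ⟨p, hp, good_ne hmin.1 hp, hns⟩
    exact symall hF hsym hcons hmin hprop row hsymm

lemma twocol [Fintype X] (hX : 5 ≤ Fintype.card X)
    (hF : IsClone F) (hsym : SymClone F) (hcons : Conservative F)
    {S : Set (X × X)} (hmin : MinS F S) (hprop : ProperS S) {x1 x2 y : X}
    (h1 : (x1, y) ∈ S) (h2 : (x2, y) ∈ S) (h12 : x1 ≠ x2) : False := by
  classical
  have col : ∀ z, z ≠ y → (z, y) ∈ S := colfill hF hsym hcons hmin h1 h2 h12
  set R : Set (X × X) := {p : X × X | p.1 ≠ p.2 ∧ (p.2, p.1) ∉ S} with hR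
  have hRgood : GoodS F R := good_rho hF hcons hmin.1
  by_cases hT : (S ∩ R).Nonempty
  · have hTS : S ∩ R = S := hmin.2.2 _ (good_inter hF hcons hmin.1 hRgood)
      Set.inter_subset_left hT
    have antisym : ∀ p ∈ S, (p.2, p.1) ∉ S := by
      intro p hp
      have : p ∈ S ∩ R := by rw [hTS]; exact hp
      exact this.2.2
    have C : ∀ w, w ≠ y → ∀ t, t ≠ y → t ≠ w → (w, t) ∈ S := by
      intro w hw t hty htw
      set π := Equiv.swap y w with hπ
      set U : Set (X × X) := S ∩ {p : X × X | (π p.1, π p.2) ∈ R} with hU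
      have hUgood : GoodS F U :=
        good_inter hF hcons hmin.1 (good_perm hsym hRgood π)
      have hwyS : (w, y) ∈ S := col w hw
      have hnotU : ¬ U.Nonempty := by
        intro hne
        have hUS : U = S := hmin.2.2 _ hUgood Set.inter_subset_left hne
        have : (w, y) ∈ U := hUS ▸ hwyS
        have h2 := this.2
        simp only [Set.mem_setOf_eq] at h2
        rw [hπ] at h2
        rw [Equiv.swap_apply_left, Equiv.swap_apply_right] at h2
        exact h2.2 hwyS
      have htyS : (t, y) ∈ S := col t hty
      by_contra hwtS
      apply hnotU
      refine ⟨(t, y), htyS, ?_⟩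
      simp only [Set.mem_setOf_eq]
      rw [hπ, Equiv.swap_apply_of_ne_of_ne hty htw, Equiv.swap_apply_left]
      exact ⟨htw, hwtS⟩
    obtain ⟨z, hzy, -, -, -⟩ := exists_notin4 hX y y y y
    obtain ⟨z', hz'y, hz'z, -, -⟩ := exists_notin4 hX y z z z
    have e1 : (z, z') ∈ S := C z hzy z' hz'y hz'z
    have e2 : (z', z) ∈ S := C z' hz'y z hzy hz'z.symm
    exact antisym (z, z') e1 e2
  · have hsymm : ∀ p ∈ S, (p.2, p.1) ∈ S := by
      intro p hp
      by_contra hns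
      exact hT ⟨p, hp, good_ne hmin.1 hp, hns⟩
    have row : ∀ z, z ≠ y → (y, z) ∈ S := fun z hz => hsymm (z, y) (col z hz)
    exact symall hF hsym hcons hmin hprop row hsymm

lemma classify [Fintype X] (hX : 5 ≤ Fintype.card X)
    (hF : IsClone F) (hsym : SymClone F) (hcons : Conservative F)
    {S : Set (X × X)} (hmin : MinS F S) (hprop : ProperS S) {p q : X}
    (hpq : (p, q) ∈ S) :
    ∀ c d : X, (c, d) ∈ S → (c = p ∧ d = q) ∨ (c = q ∧ d = p) := by
  classical
  intro c d hcd
  by_contra hcon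
  push_neg at hcon
  have hcdne : c ≠ d := good_ne hmin.1 hcd
  have hpqne : p ≠ q := good_ne hmin.1 hpq
  by_cases hcp : c = p
  · subst hcp
    have hdq : d ≠ q := fun h => (hcon.1 rfl h).elim
    exact tworow hX hF hsym hcons hmin hprop hpq hcd hdq.symm
  by_cases hdq : d = q
  · subst hdq
    exact twocol hX hF hsym hcons hmin hprop hpq hcd (Ne.symm hcp)
  by_cases hdp : d = p
  · -- c ∉ {p, q}
    have hcq : c ≠ q := fun h => (hcon.2 h hdp).elim
    obtain ⟨c', h1, h2, h3, -⟩ := exists_notin4 hX p q c c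
    have hstep := step hF hsym hcons hmin (Equiv.swap c c') hpq (by
      rw [Equiv.swap_apply_of_ne_of_ne (fun h => hcp h.symm) (Ne.symm h1),
        Equiv.swap_apply_of_ne_of_ne (Ne.symm hcq) (Ne.symm h2)]
      exact hpq)
    have := hstep (c, d) hcd
    simp only at this
    rw [Equiv.swap_apply_left,
      Equiv.swap_apply_of_ne_of_ne hcdne.symm (fun h => h1 (hdp ▸ h.symm))] at this
    exact twocol hX hF hsym hcons hmin hprop hcd this (Ne.symm h3)
  · -- d ∉ {p, q}
    obtain ⟨d', h1, h2, h3, h4⟩ := exists_notin4 hX p q c d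
    have hstep := step hF hsym hcons hmin (Equiv.swap d d') hpq (by
      rw [Equiv.swap_apply_of_ne_of_ne (Ne.symm hdp) (Ne.symm h1),
        Equiv.swap_apply_of_ne_of_ne (Ne.symm hdq) (Ne.symm h2)]
      exact hpq)
    have := hstep (c, d) hcd
    simp only at this
    rw [Equiv.swap_apply_of_ne_of_ne hcdne (Ne.symm h3), Equiv.swap_apply_left] at this
    exact tworow hX hF hsym hcons hmin hprop hcd this (Ne.symm h4)

lemma exists_min [Fintype X] (hF : IsClone F) (hcons : Conservative F)
    {f : (Fin 2 → X) → X} (hf : f ∈ F 2) (hfne : ¬ IsProj 2 f) :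
    ∃ S : Set (X × X), MinS F S ∧ ProperS S := by
  classical
  -- S2 f is nonempty
  have hexpand : ∀ x : Fin 2 → X, (![x 0, x 1] : Fin 2 → X) = x := by
    intro x; funext i; fin_cases i <;> simp
  have hne1 : (S2 f).Nonempty := by
    rw [IsProj] at hfne
    push_neg at hfne
    obtain ⟨x, hx⟩ := hfne 0
    obtain ⟨i, hi⟩ := hcons 2 f hf x
    fin_cases i
    · exact absurd hi hx
    · exact ⟨(x 0, x 1), fun h => hx (hi.trans h.symm), by
        show f ![x 0, x 1] = x 1
        rw [hexpand x]; exact hi⟩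
  have hne2 : ∃ m n : X, m ≠ n ∧ (m, n) ∉ S2 f := by
    rw [IsProj] at hfne
    push_neg at hfne
    obtain ⟨x, hx⟩ := hfne 1
    obtain ⟨i, hi⟩ := hcons 2 f hf x
    fin_cases i
    · refine ⟨x 0, x 1, fun h => hx (hi.trans h), fun hmem => hx ?_⟩
      have h2 := hmem.2
      rw [hexpand x] at h2
      exact h2
    · exact absurd hi hx
  -- minimal ncard
  set A : Set ℕ := {n : ℕ | ∃ S : Set (X × X), GoodS F S ∧ S.Nonempty ∧ S.ncard = n} with hA
  have hAne : A.Nonempty := ⟨(S2 f).ncard, S2 f, ⟨f, hf, rfl⟩, hne1, rfl⟩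
  obtain ⟨S, hSgood, hSne, hScard⟩ := Nat.sInf_mem hAne
  have hminS : MinS F S := by
    refine ⟨hSgood, hSne, fun U hU hUS hUne => ?_⟩
    have h1 : sInf A ≤ U.ncard := Nat.sInf_le ⟨U, hU, hUne, rfl⟩
    have h2 : U.ncard ≤ S.ncard := Set.ncard_le_ncard hUS (Set.toFinite S)
    exact Set.eq_of_subset_of_ncard_le hUS (by omega) (Set.toFinite S)
  refine ⟨S, hminS, ?_⟩
  by_contra hcon
  rw [ProperS] at hcon
  push_neg at hcon
  obtain ⟨m, n, hmn, hns⟩ := hne2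
  have hsub : S2 f ⊆ S := by
    rintro ⟨x, y⟩ hxy
    exact hcon x y hxy.1
  have hssub : S2 f ⊂ S := ⟨hsub, fun hrev => hns (hrev (hcon m n hmn))⟩
  have := Set.ncard_lt_ncard hssub (Set.toFinite S)
  have h1 : sInf A ≤ (S2 f).ncard := Nat.sInf_le ⟨S2 f, ⟨f, hf, rfl⟩, hne1, rfl⟩
  omega

lemma permtwo {u v p q : X} (huv : u ≠ v) (hpq : p ≠ q) :
    ∃ π : Equiv.Perm X, π u = p ∧ π v = q := by
  classical
  refine ⟨(Equiv.swap u p).trans (Equiv.swap ((Equiv.swap u p) v) q), ?_, ?_⟩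
  · simp only [Equiv.trans_apply, Equiv.swap_apply_left]
    have h1 : (Equiv.swap u p) v ≠ p := by
      intro h
      exact huv ((Equiv.swap u p).injective ((Equiv.swap_apply_left u p).trans h.symm))
    exact Equiv.swap_apply_of_ne_of_ne h1.symm hpq
  · simp only [Equiv.trans_apply]
    exact Equiv.swap_apply_left _ _

lemma pairop [Fintype X] (hX : 5 ≤ Fintype.card X)
    (hF : IsClone F) (hsym : SymClone F) (hcons : Conservative F)
    (hbin : ∃ f ∈ F 2, ¬ IsProj 2 f) :
    ∀ u v : X, u ≠ v → ∃ h ∈ F 2, h ![u, v] = v ∧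
      ∀ x y : X, ¬((x = u ∧ y = v) ∨ (x = v ∧ y = u)) → h ![x, y] = x := by
  classical
  obtain ⟨f, hf, hfne⟩ := hbin
  obtain ⟨S, hminS, hpropS⟩ := exists_min hF hcons hf hfne
  obtain ⟨⟨p, q⟩, hpqS⟩ := hminS.2.1
  have hclass := classify hX hF hsym hcons hminS hpropS hpqS
  intro u v huv
  have hpq : p ≠ q := good_ne hminS.1 hpqS
  obtain ⟨π, hπu, hπv⟩ := permtwo huv hpq
  have hgood : GoodS F {r : X × X | (π r.1, π r.2) ∈ S} := good_perm hsym hminS.1 π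
  obtain ⟨h, hh, hheq⟩ := hgood
  refine ⟨h, hh, ?_, ?_⟩
  · have huvS : (u, v) ∈ S2 h := by
      rw [← hheq]
      simp only [Set.mem_setOf_eq]
      rw [hπu, hπv]; exact hpqS
    exact huvS.2
  · intro x y hxy
    apply S2_eq_x hcons hh
    intro hmem
    rw [← hheq] at hmem
    simp only [Set.mem_setOf_eq] at hmem
    rcases hclass _ _ hmem with ⟨e1, e2⟩ | ⟨e1, e2⟩
    · exact hxy (Or.inl ⟨π.injective (e1.trans hπu.symm), π.injective (e2.trans hπv.symm)⟩)
    · exact hxy (Or.inr ⟨π.injective (e1.trans hπv.symm), π.injective (e2.trans hπu.symm)⟩)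

end mid

theorem stmt15 {X : Type*} [Fintype X] (hX : 5 ≤ Fintype.card X)
    (F : ∀ n : ℕ, Set ((Fin n → X) → X)) (hF : IsClone F) (hsym : SymClone F)
    (hcons : Conservative F) (hbin : ∃ f ∈ F 2, ¬ IsProj 2 f) :
    ∀ a : Fin 4 → X, Function.Injective a → ∃ g ∈ F 4,
      (∀ b : Fin 4 → X, ¬ Function.Injective b → g b = b 0) ∧
      g a = a 1 := by
  classical
  intro a hinj
  have d01 : a 0 ≠ a 1 := hinj.ne (by decide)
  have d02 : a 0 ≠ a 2 := hinj.ne (by decide)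
  have d03 : a 0 ≠ a 3 := hinj.ne (by decide)
  have d12 : a 1 ≠ a 2 := hinj.ne (by decide)
  have d13 : a 1 ≠ a 3 := hinj.ne (by decide)
  have d23 : a 2 ≠ a 3 := hinj.ne (by decide)
  have d21 : a 2 ≠ a 1 := d12.symm
  have d32 : a 3 ≠ a 2 := d23.symm
  have d31 : a 3 ≠ a 1 := d13.symm
  obtain ⟨h1, hh1, E1a, E1b⟩ := pairop hX hF hsym hcons hbin (a 0) (a 3) d03
  obtain ⟨h2, hh2, E2a, E2b⟩ := pairop hX hF hsym hcons hbin (a 3) (a 2) d32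
  obtain ⟨h3, hh3, E3a, E3b⟩ := pairop hX hF hsym hcons hbin (a 2) (a 1) d21
  obtain ⟨h4, hh4, E4a, E4b⟩ := pairop hX hF hsym hcons hbin (a 0) (a 1) d01
  refine ⟨fun x => h4 ![x 0, h3 ![h2 ![h1 ![x 0, x 3], x 2], x 1]], ?_, ?_, ?_⟩
  · exact comp2 hF hh4 (by norm_num) (hF.1 4 0)
      (comp2 hF hh3 (by norm_num)
        (comp2 hF hh2 (by norm_num)
          (comp2 hF hh1 (by norm_num) (hF.1 4 0) (hF.1 4 3)) (hF.1 4 2)) (hF.1 4 1))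
  · intro b hbinj
    have hnb : ¬(b 0 = a 0 ∧ b 1 = a 1 ∧ b 2 = a 2 ∧ b 3 = a 3) := by
      rintro ⟨k0, k1, k2, k3⟩
      have hba : b = a := funext fun i => by fin_cases i <;> assumption
      rw [hba] at hbinj
      exact hbinj hinj
    show h4 ![b 0, h3 ![h2 ![h1 ![b 0, b 3], b 2], b 1]] = b 0
    by_cases hb0 : b 0 = a 0
    · by_cases hb3 : b 3 = a 3
      · have e1 : h1 ![b 0, b 3] = a 3 := by rw [hb0, hb3]; exact E1a
        rw [e1]
        by_cases hb2 : b 2 = a 2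
        · have e2 : h2 ![a 3, b 2] = a 2 := by rw [hb2]; exact E2a
          rw [e2]
          by_cases hb1 : b 1 = a 1
          · exact absurd ⟨hb0, hb1, hb2, hb3⟩ hnb
          · have e3 : h3 ![a 2, b 1] = a 2 :=
              E3b _ _ (by rintro (⟨-, h⟩ | ⟨h, -⟩); exacts [hb1 h, d21 h])
            rw [e3]
            exact E4b _ _
              (by rintro (⟨-, h⟩ | ⟨h, -⟩); exacts [d21 h, d01 (hb0.symm.trans h)])
        · have e2 : h2 ![a 3, b 2] = a 3 :=
            E2b _ _ (by rintro (⟨-, h⟩ | ⟨h, -⟩); exacts [hb2 h, d32 h])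
          rw [e2]
          have e3 : h3 ![a 3, b 1] = a 3 :=
            E3b _ _ (by rintro (⟨h, -⟩ | ⟨h, -⟩); exacts [d32 h, d31 h])
          rw [e3]
          exact E4b _ _
            (by rintro (⟨-, h⟩ | ⟨h, -⟩); exacts [d31 h, d01 (hb0.symm.trans h)])
      · have e1 : h1 ![b 0, b 3] = b 0 :=
          E1b _ _ (by rintro (⟨-, h⟩ | ⟨h, -⟩); exacts [hb3 h, d03 (hb0.symm.trans h)])
        rw [e1, hb0]
        have e2 : h2 ![a 0, b 2] = a 0 :=
          E2b _ _ (by rintro (⟨h, -⟩ | ⟨h, -⟩); exacts [d03 h, d02 h])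
        rw [e2]
        have e3 : h3 ![a 0, b 1] = a 0 :=
          E3b _ _ (by rintro (⟨h, -⟩ | ⟨h, -⟩); exacts [d02 h, d01 h])
        rw [e3]
        rcases cons2 hcons hh4 (a 0) (a 0) with e4 | e4 <;> exact e4
    · by_cases hb0' : b 0 = a 1
      · have e1 : h1 ![b 0, b 3] = b 0 :=
          E1b _ _ (by rintro (⟨h, -⟩ | ⟨h, -⟩); exacts [hb0 h, d13 (hb0'.symm.trans h)])
        rw [e1]
        have e2 : h2 ![b 0, b 2] = b 0 :=
          E2b _ _ (by rintro (⟨h, -⟩ | ⟨h, -⟩); exacts [d13 (hb0'.symm.trans h), d12 (hb0'.symm.trans h)])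
        rw [e2]
        by_cases hb1 : b 1 = a 2
        · rcases cons2 hcons hh3 (b 0) (b 1) with e3 | e3
          · rw [e3]
            rcases cons2 hcons hh4 (b 0) (b 0) with e4 | e4 <;> exact e4
          · rw [e3]
            exact E4b _ _ (by rintro (⟨h, -⟩ | ⟨-, h⟩); exacts [hb0 h, d02 (h.symm.trans hb1)])
        · have e3 : h3 ![b 0, b 1] = b 0 :=
            E3b _ _ (by rintro (⟨h, -⟩ | ⟨-, h⟩); exacts [d12 (hb0'.symm.trans h), hb1 h])
          rw [e3]
          rcases cons2 hcons hh4 (b 0) (b 0) with e4 | e4 <;> exact e4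
      · exact E4b _ _ (by rintro (⟨h, -⟩ | ⟨h, -⟩); exacts [hb0 h, hb0' h])
  · show h4 ![a 0, h3 ![h2 ![h1 ![a 0, a 3], a 2], a 1]] = a 1
    rw [E1a, E2a, E3a]
    exact E4a
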